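/- arXiv:math/0702502 — 3 statements merged into one kernel-verified Lean document; each statement's English description precedes it below -/
import Mathlib

section
/- Let e ≥ 1, n with 1 ≤ n ≤ e, and integers p, K with p coprime to e. For 1 ≤ i,j ≤ e set ν_{i,j} := ⌈(p·i-K-j)/e⌉, let j_i ∈ {1,...,e} be the least positive integer ≡ p·i-K (mod e), and let B_n := {1 ≤ i ≤ n : j_i ≤ n}. Then min over σ in the symmetric group S_n of Σ_{k=1}^n ν_{k,σ(k)} equals Σ_{k=1}^n ⌈(p·k-K)/e⌉ - #B_n, and a permutation σ ∈ S_n attains this minimum if and only if σ(i) ≥ j_i for every i ∈ B_n. -/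
/-!
Write `p * i - K = e * q + j_i` with `1 ≤ j_i ≤ e`. Then for `1 ≤ j ≤ e` one has
`ν_{i,j} = ⌈(p * i - K) / e⌉ - [j_i ≤ j]`, so the sum along `σ` is `Σ_k ⌈(p * k - K) / e⌉` minus
the number of `k` with `j_k ≤ σ(k)`. Since `σ(k) ≤ n`, these `k` lie in `B_n`, which gives the lower
bound, with equality iff `j_i ≤ σ(i)` for all `i ∈ B_n`. As `p` is a unit mod `e`, `i ↦ j_i` is
injective on `{1, …, n}`, so `i ↦ j_i` on `B_n` extends to a permutation attaining the bound.
-/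

open Finset

theorem ceil_intCast_div_natCast_eq_iff {e : ℕ} (he : 0 < e) {r m : ℤ} :
    ⌈(r : ℚ) / e⌉ = m ↔ e * (m - 1) < r ∧ r ≤ e * m := by
  have he' : (0 : ℚ) < e := by exact_mod_cast he
  rw [Int.ceil_eq_iff, lt_div_iff₀ he', div_le_iff₀ he', mul_comm, mul_comm (m : ℚ)]
  norm_cast

theorem ceil_sub_div_eq_of_modEq {e : ℕ} (he : 0 < e) {a b c : ℤ} (hac : a ≡ c [ZMOD e])
    (ha₀ : 0 < a) (ha : a ≤ e) (hb₀ : 0 < b) (hb : b ≤ e) :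
    ⌈((c - b : ℤ) : ℚ) / e⌉ = ⌈(c : ℚ) / e⌉ - if a ≤ b then 1 else 0 := by
  obtain ⟨q, hq⟩ := hac.dvd
  have hc : ⌈(c : ℚ) / e⌉ = q + 1 :=
    (ceil_intCast_div_natCast_eq_iff he).2 ⟨by linarith, by linarith⟩
  rw [hc, ceil_intCast_div_natCast_eq_iff he]
  split_ifs with hab <;> constructor <;> linarith

theorem eq_of_mul_modEq_of_isCoprime {e a b : ℕ} {p : ℤ} (hp : IsCoprime p e)
    (h : p * a ≡ p * b [ZMOD e]) (hab : |(b : ℤ) - a| < e) : a = b := by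
  have hdvd : (e : ℤ) ∣ b - a := hp.symm.dvd_of_dvd_mul_left (by simpa [mul_sub] using h.dvd)
  exact Nat.ModEq.eq_of_abs_lt (Int.natCast_modEq_iff.1 (Int.modEq_of_dvd hdvd)) hab

theorem Equiv.Perm.exists_apply_eq_of_injective {α : Type*} [Finite α] {P : α → Prop}
    (f : Subtype P → α) (hf : Function.Injective f) :
    ∃ σ : Equiv.Perm α, ∀ a (ha : P a), σ a = f ⟨a, ha⟩ := by
  classical
  exact ⟨(Equiv.ofInjective f hf).extendSubtype,
    fun a ha => Equiv.extendSubtype_apply_of_mem _ a ha⟩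

theorem Finset.sum_Icc_one_eq_sum_fin {M : Type*} [AddCommMonoid M] (f : ℕ → M) (n : ℕ) :
    ∑ k ∈ Icc 1 n, f k = ∑ k : Fin n, f (k + 1) := by
  rw [Fin.sum_univ_eq_sum_range (fun k => f (k + 1)), range_eq_Ico, sum_Ico_add', zero_add,
    Ico_add_one_right_eq_Icc]

theorem isLeast_sub_card_of_subset {X β : Type*} (S : X → ℤ) (A : ℤ) (Q : X → Finset β)
    (B : Finset β) (hS : ∀ x, S x = A - #(Q x)) (hQB : ∀ x, Q x ⊆ B) (hB : ∃ x, B ⊆ Q x) :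
    IsLeast (Set.range S) (A - #B) ∧ ∀ x, S x = A - #B ↔ B ⊆ Q x := by
  have hiff : ∀ x, S x = A - #B ↔ B ⊆ Q x := fun x => by
    rw [hS, sub_right_inj, Nat.cast_inj]
    exact ⟨fun h => (eq_of_subset_of_card_le (hQB x) h.ge).superset,
      fun h => congrArg card ((hQB x).antisymm h)⟩
  obtain ⟨x₀, hx₀⟩ := hB
  refine ⟨⟨⟨x₀, (hiff x₀).2 hx₀⟩, ?_⟩, hiff⟩
  rintro _ ⟨x, rfl⟩
  have := card_le_card (hQB x)
  rw [hS]
  omega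

section

variable {e n : ℕ} {p K : ℤ} {j : ℕ → ℕ}

theorem sum_ceil_eq_sub_card (he : 0 < e) (hn : n ≤ e)
    (hj : ∀ i, 1 ≤ j i ∧ j i ≤ e ∧ (j i : ℤ) ≡ p * i - K [ZMOD e]) (τ : Fin n → Fin n) :
    ∑ k : Fin n, ⌈((p * ((k : ℕ) + 1) - K - (((τ k : Fin n) : ℕ) + 1) : ℤ) : ℚ) / (e : ℚ)⌉ =
      ∑ k : Fin n, ⌈((p * ((k : ℕ) + 1) - K : ℤ) : ℚ) / (e : ℚ)⌉ -
        #{k : Fin n | j ((k : ℕ) + 1) ≤ (τ k : ℕ) + 1} := by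
  rw [card_filter, Nat.cast_sum, ← sum_sub_distrib]
  refine sum_congr rfl fun k _ => ?_
  obtain ⟨hj₀, hje, hjK⟩ := hj ((k : ℕ) + 1)
  have hτ := (τ k).isLt
  push_cast at hjK
  rw [ceil_sub_div_eq_of_modEq he hjK (by omega) (by omega) (by omega) (by omega)]
  split_ifs <;> omega

theorem exists_perm_forall_le (hp : IsCoprime p e) (hn : n ≤ e)
    (hj : ∀ i, 1 ≤ j i ∧ j i ≤ e ∧ (j i : ℤ) ≡ p * i - K [ZMOD e]) :
    ∃ σ : Equiv.Perm (Fin n),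
      ∀ i : Fin n, j ((i : ℕ) + 1) ≤ n → j ((i : ℕ) + 1) ≤ (σ i : ℕ) + 1 := by
  have hj_inj : ∀ a b : Fin n, j ((a : ℕ) + 1) = j ((b : ℕ) + 1) → a = b := fun a b hab => by
    have h : p * ((a : ℕ) + 1 : ℕ) ≡ p * ((b : ℕ) + 1 : ℕ) [ZMOD e] :=
      ((hj _).2.2.symm.trans (hab ▸ (hj _).2.2)).add_right_cancel' (-K)
    have := eq_of_mul_modEq_of_isCoprime hp h (by rw [abs_lt]; omega)
    omega
  let f : {i : Fin n // j ((i : ℕ) + 1) ≤ n} → Fin n := fun i =>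
    ⟨j ((i : ℕ) + 1) - 1, by have := (hj ((i : ℕ) + 1)).1; have := i.2; omega⟩
  have hf : Function.Injective f := fun a b hab => by
    have := (hj ((a : ℕ) + 1)).1
    have := (hj ((b : ℕ) + 1)).1
    exact Subtype.ext (hj_inj _ _ (by simp only [f, Fin.mk.injEq] at hab; omega))
  obtain ⟨σ, hσ⟩ := Equiv.Perm.exists_apply_eq_of_injective f hf
  exact ⟨σ, fun i hi => by rw [hσ i hi]; simp only [f]; omega⟩

end

theorem stmt11_general (e n : ℕ) (p K : ℤ) (he : 1 ≤ e) (hn2 : n ≤ e)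
    (hp : IsCoprime p (e : ℤ)) (j : ℕ → ℕ)
    (hj : ∀ i, 1 ≤ j i ∧ j i ≤ e ∧ (j i : ℤ) ≡ p * i - K [ZMOD e]) :
    IsLeast
      {y : ℤ | ∃ σ : Equiv.Perm (Fin n),
        (∑ k : Fin n,
          ⌈((p * ((k : ℕ) + 1) - K - (((σ k : Fin n) : ℕ) + 1) : ℤ) : ℚ) / (e : ℚ)⌉) = y}
      ((∑ k ∈ Finset.Icc 1 n, ⌈((p * (k : ℤ) - K : ℤ) : ℚ) / (e : ℚ)⌉) -
        ((Finset.Icc 1 n).filter (fun i => j i ≤ n)).card) ∧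
    ∀ σ : Equiv.Perm (Fin n),
      (∑ k : Fin n,
          ⌈((p * ((k : ℕ) + 1) - K - (((σ k : Fin n) : ℕ) + 1) : ℤ) : ℚ) / (e : ℚ)⌉) =
        ((∑ k ∈ Finset.Icc 1 n, ⌈((p * (k : ℤ) - K : ℤ) : ℚ) / (e : ℚ)⌉) -
          ((Finset.Icc 1 n).filter (fun i => j i ≤ n)).card) ↔
      ∀ i : Fin n, j ((i : ℕ) + 1) ≤ n → j ((i : ℕ) + 1) ≤ ((σ i : Fin n) : ℕ) + 1 := by
  have hsum : ∑ k ∈ Icc 1 n, ⌈((p * (k : ℤ) - K : ℤ) : ℚ) / (e : ℚ)⌉ =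
      ∑ k : Fin n, ⌈((p * ((k : ℕ) + 1) - K : ℤ) : ℚ) / (e : ℚ)⌉ := by
    rw [sum_Icc_one_eq_sum_fin]
    push_cast
    rfl
  have hcard : #{i ∈ Icc 1 n | j i ≤ n} = #{i : Fin n | j ((i : ℕ) + 1) ≤ n} := by
    rw [card_filter, card_filter, sum_Icc_one_eq_sum_fin]
  have hQ_subset (σ : Equiv.Perm (Fin n)) :
      ({i | j ((i : ℕ) + 1) ≤ (σ i : ℕ) + 1} : Finset (Fin n)) ⊆
        ({i | j ((i : ℕ) + 1) ≤ n} : Finset (Fin n)) := fun i hi => by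
    simp only [mem_filter, mem_univ, true_and] at hi ⊢
    exact hi.trans (σ i).isLt
  have hsubset_Q_iff (σ : Equiv.Perm (Fin n)) :
      ({i | j ((i : ℕ) + 1) ≤ n} : Finset (Fin n)) ⊆
        ({i | j ((i : ℕ) + 1) ≤ (σ i : ℕ) + 1} : Finset (Fin n)) ↔
        ∀ i : Fin n, j ((i : ℕ) + 1) ≤ n → j ((i : ℕ) + 1) ≤ (σ i : ℕ) + 1 := by
    simp [subset_iff]
  obtain ⟨σ₀, hσ₀⟩ := exists_perm_forall_le hp hn2 hj
  obtain ⟨hleast, hiff⟩ := isLeast_sub_card_of_subset _ _ _ _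
    (fun σ : Equiv.Perm (Fin n) => sum_ceil_eq_sub_card he hn2 hj σ) hQ_subset
    ⟨σ₀, (hsubset_Q_iff σ₀).2 hσ₀⟩
  rw [hsum, hcard]
  exact ⟨hleast, fun σ => (hiff σ).trans (hsubset_Q_iff σ)⟩

theorem stmt11 (e n : ℕ) (p K : ℤ) (he : 1 ≤ e) (hn1 : 1 ≤ n) (hn2 : n ≤ e)
    (hp : IsCoprime p (e : ℤ)) (j : ℕ → ℕ)
    (hj : ∀ i, 1 ≤ j i ∧ j i ≤ e ∧ (j i : ℤ) ≡ p * i - K [ZMOD e]) :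
    IsLeast
      {y : ℤ | ∃ σ : Equiv.Perm (Fin n),
        (∑ k : Fin n,
          ⌈((p * ((k : ℕ) + 1) - K - (((σ k : Fin n) : ℕ) + 1) : ℤ) : ℚ) / (e : ℚ)⌉) = y}
      ((∑ k ∈ Finset.Icc 1 n, ⌈((p * (k : ℤ) - K : ℤ) : ℚ) / (e : ℚ)⌉) -
        ((Finset.Icc 1 n).filter (fun i => j i ≤ n)).card) ∧
    ∀ σ : Equiv.Perm (Fin n),
      (∑ k : Fin n,
          ⌈((p * ((k : ℕ) + 1) - K - (((σ k : Fin n) : ℕ) + 1) : ℤ) : ℚ) / (e : ℚ)⌉) =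
        ((∑ k ∈ Finset.Icc 1 n, ⌈((p * (k : ℤ) - K : ℤ) : ℚ) / (e : ℚ)⌉) -
          ((Finset.Icc 1 n).filter (fun i => j i ≤ n)).card) ↔
      ∀ i : Fin n, j ((i : ℕ) + 1) ≤ n → j ((i : ℕ) + 1) ≤ ((σ i : Fin n) : ℕ) + 1 :=
  stmt11_general e n p K he hn2 hp j hj
end

section
/- Let e ≥ 1, p coprime to e, K an integer, and for 1 ≤ n ≤ e define Y_n := Σ_{k=1}^n ⌈(p·k-K)/e⌉ - #B_n where B_n := {1 ≤ i ≤ n : j_i ≤ n} and j_i ∈ {1,...,e} is the least positive residue of p·i - K modulo e (set Y_0 := 0). If p ≥ 3e, then for all 0 ≤ n ≤ e-2 one has 2·Y_{n+1} < Y_n + Y_{n+2} (i.e., the sequence of increments Y_{n+1} - Y_n is strictly increasing). -/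
/-!
Write `Y n = ∑_{k ≤ n} c k - #B n` with `c k = ⌈(p k - K) / e⌉`. Since `p ≥ 3e`, consecutive
ceilings differ by at least `3`, so `c (n + 2) - c (n + 1) ≥ 3`. On the other hand `#B n` never
decreases and grows by at most `2` per step: the only new members of `B (n + 2)` are `n + 2` itself
and the at most one `i` with `j i = n + 2`, because `i ↦ j i` is injective on `[1, e]` as `p` is a
unit modulo `e`. Hence the second difference of `Y` is at least `3 - 2 + 0 = 1`.
-/

open Finset

lemma injOn_Icc_of_modEq {e : ℕ} {p K : ℤ} (hcop : IsCoprime p e) {j : ℕ → ℕ}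
    (hj : ∀ i, (j i : ℤ) ≡ p * i - K [ZMOD e]) : Set.InjOn j (Set.Icc 1 e) := by
  rintro a ⟨ha1, hae⟩ b ⟨hb1, hbe⟩ hab
  have hmod : p * a ≡ p * b [ZMOD e] := Int.ModEq.add_right_cancel' (-K) <| by
    simpa only [sub_eq_add_neg] using (hj a).symm.trans (hab ▸ hj b)
  have hdvd : (e : ℤ) ∣ b - a :=
    hcop.symm.dvd_of_dvd_mul_left (by simpa only [mul_sub] using hmod.dvd)
  have hzero := Int.eq_zero_of_abs_lt_dvd hdvd (abs_sub_lt_iff.mpr ⟨by omega, by omega⟩)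
  omega

lemma card_filter_le_card_filter_succ (j : ℕ → ℕ) (m : ℕ) :
    #{i ∈ Icc 1 m | j i ≤ m} ≤ #{i ∈ Icc 1 (m + 1) | j i ≤ m + 1} := by
  apply card_le_card
  intro i
  simp only [mem_filter, mem_Icc]
  omega

lemma card_filter_succ_le_card_filter_add_two {j : ℕ → ℕ} {e : ℕ} (hje : ∀ i, j i ≤ e)
    (hinj : Set.InjOn j (Set.Icc 1 e)) (m : ℕ) :
    #{i ∈ Icc 1 (m + 1) | j i ≤ m + 1} ≤ #{i ∈ Icc 1 m | j i ≤ m} + 2 := by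
  have hsub : {i ∈ Icc 1 (m + 1) | j i ≤ m + 1} ⊆
      {i ∈ Icc 1 m | j i ≤ m} ∪ insert (m + 1) {i ∈ Icc 1 (m + 1) | j i = m + 1} := by
    intro i
    simp only [mem_filter, mem_Icc, mem_union, mem_insert]
    omega
  have hpreimage : #{i ∈ Icc 1 (m + 1) | j i = m + 1} ≤ 1 := by
    refine card_le_one.mpr fun a ha b hb => ?_
    simp only [mem_filter, mem_Icc] at ha hb
    have := hje a
    exact hinj ⟨ha.1.1, by omega⟩ ⟨hb.1.1, by omega⟩ (ha.2.trans hb.2.symm)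
  calc #{i ∈ Icc 1 (m + 1) | j i ≤ m + 1}
      ≤ #{i ∈ Icc 1 m | j i ≤ m} + #(insert (m + 1) {i ∈ Icc 1 (m + 1) | j i = m + 1}) :=
        (card_le_card hsub).trans (card_union_le _ _)
    _ ≤ #{i ∈ Icc 1 m | j i ≤ m} + 2 := by
        have := card_insert_le (m + 1) {i ∈ Icc 1 (m + 1) | j i = m + 1}
        omega

lemma ceil_div_add_le_ceil_div_succ {e : ℕ} {p d : ℤ} (he : 0 < e) (hp : d * e ≤ p) (K : ℤ)
    (k : ℕ) :
    ⌈((p * k - K : ℤ) : ℚ) / e⌉ + d ≤ ⌈((p * (k + 1 : ℕ) - K : ℤ) : ℚ) / e⌉ := by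
  have he' : (0 : ℚ) < e := by exact_mod_cast he
  have hp' : (d : ℚ) * e ≤ p := by exact_mod_cast hp
  rw [← Int.ceil_add_intCast]
  apply Int.ceil_le_ceil
  rw [div_add' _ _ _ he'.ne', div_le_div_iff_of_pos_right he']
  push_cast
  linarith

theorem stmt12 (e : ℕ) (p K : ℤ) (he : 1 ≤ e) (hcop : IsCoprime p (e : ℤ))
    (hp : 3 * (e : ℤ) ≤ p) (j : ℕ → ℕ)
    (hj : ∀ i, 1 ≤ j i ∧ j i ≤ e ∧ (j i : ℤ) ≡ p * i - K [ZMOD e])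
    (Y : ℕ → ℤ)
    (hY : ∀ n, Y n =
      (∑ k ∈ Finset.Icc 1 n, ⌈((p * (k : ℤ) - K : ℤ) : ℚ) / (e : ℚ)⌉) -
        ((Finset.Icc 1 n).filter (fun i => j i ≤ n)).card) :
    ∀ n, n ≤ e - 2 → 2 * Y (n + 1) < Y n + Y (n + 2) := by
  intro n _
  have hceil := ceil_div_add_le_ceil_div_succ he hp K (n + 1)
  have hB₀ := card_filter_le_card_filter_succ j n
  have hB₁ := card_filter_succ_le_card_filter_add_two (fun i => (hj i).2.1)
    (injOn_Icc_of_modEq hcop fun i => (hj i).2.2) (n + 1)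
  show 2 * Y (n + 1) < Y n + Y (n + 1 + 1)
  rw [hY, hY, hY, sum_Icc_succ_top (by omega : 1 ≤ n + 1 + 1),
    sum_Icc_succ_top (by omega : 1 ≤ n + 1)]
  omega
end

section
/- Let e ≥ 1, d ≥ 1, and suppose p ≡ 1 (mod d·e). Let 1 ≤ κ ≤ d-1 and K := (p-1)·κ/d. Then for 1 ≤ n ≤ e the minimum of Σ_{i=1}^n ⌈(p·i - σ(i) - K)/e⌉ over permutations σ of {1,...,n} is attained only at σ = identity, and this minimum equals ((p-1)/e)·(n(n+1)/2) - ((p-1)/(d·e))·κ·n. -/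
private lemma gauss_aux (N : ℕ) : 2 * ∑ i ∈ Finset.range N, ((i : ℤ) + 1) = N * (N + 1) := by
  induction N with
  | zero => simp
  | succ k ih =>
    rw [Finset.sum_range_succ]
    push_cast
    linarith

theorem stmt15 (d e n κ : ℕ) (p K : ℤ) (hd : 1 ≤ d) (he : 1 ≤ e)
    (hp : p ≡ 1 [ZMOD ((d : ℤ) * e)]) (hκ1 : 1 ≤ κ) (hκ2 : κ ≤ d - 1)
    (hK : K * d = (p - 1) * κ) (hn1 : 1 ≤ n) (hn2 : n ≤ e) :
    (∀ σ : Equiv.Perm (Fin n),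
      ((p : ℚ) - 1) / e * (n * (n + 1) / 2) - ((p : ℚ) - 1) / (d * e) * κ * n ≤
        (((∑ k : Fin n,
          ⌈((p * ((k : ℕ) + 1) - (((σ k : Fin n) : ℕ) + 1) - K : ℤ) : ℚ) / (e : ℚ)⌉) : ℤ) : ℚ)) ∧
    (((∑ k : Fin n,
        ⌈((p * ((k : ℕ) + 1) - (((k : Fin n) : ℕ) + 1) - K : ℤ) : ℚ) / (e : ℚ)⌉) : ℤ) : ℚ) =
      ((p : ℚ) - 1) / e * (n * (n + 1) / 2) - ((p : ℚ) - 1) / (d * e) * κ * n ∧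
    ∀ σ : Equiv.Perm (Fin n),
      (((∑ k : Fin n,
        ⌈((p * ((k : ℕ) + 1) - (((σ k : Fin n) : ℕ) + 1) - K : ℤ) : ℚ) / (e : ℚ)⌉) : ℤ) : ℚ) =
        ((p : ℚ) - 1) / e * (n * (n + 1) / 2) - ((p : ℚ) - 1) / (d * e) * κ * n →
      σ = 1 := by
  have hd0 : (d : ℤ) ≠ 0 := by exact_mod_cast (Nat.pos_of_ne_zero (by omega)).ne'
  have he0 : (e : ℚ) ≠ 0 := by exact_mod_cast (Nat.pos_of_ne_zero (by omega)).ne'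
  have he0' : (0 : ℚ) < e := by exact_mod_cast he
  have hd0' : (d : ℚ) ≠ 0 := by exact_mod_cast (Nat.pos_of_ne_zero (by omega)).ne'
  obtain ⟨m, hm⟩ : ((d : ℤ) * e) ∣ (p - 1) := hp.symm.dvd
  have hK' : K = (e : ℤ) * (m * κ) := by
    have h : K * d = ((e : ℤ) * (m * κ)) * d := by rw [hK, hm]; ring
    exact mul_right_cancel₀ hd0 h
  -- pointwise ceiling computation
  have key : ∀ (σ : Equiv.Perm (Fin n)) (k : Fin n),
      ⌈((p * ((k : ℕ) + 1) - (((σ k : Fin n) : ℕ) + 1) - K : ℤ) : ℚ) / (e : ℚ)⌉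
        = (d : ℤ) * m * ((k : ℕ) + 1) - m * κ
          + (if ((σ k : Fin n) : ℕ) < (k : ℕ) then 1 else 0) := by
    intro σ k
    have hp' : p = (d : ℤ) * e * m + 1 := by linarith
    have hnum : (p * ((k : ℕ) + 1) - (((σ k : Fin n) : ℕ) + 1) - K : ℤ)
        = (e : ℤ) * ((d : ℤ) * m * ((k : ℕ) + 1) - m * κ)
          + (((k : ℕ) : ℤ) - ((σ k : Fin n) : ℕ)) := by
      rw [hp', hK']; ring
    rw [hnum]
    have hsplit : (((e : ℤ) * ((d : ℤ) * m * ((k : ℕ) + 1) - m * κ)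
          + (((k : ℕ) : ℤ) - ((σ k : Fin n) : ℕ)) : ℤ) : ℚ) / (e : ℚ)
        = (((k : ℕ) : ℚ) - (((σ k : Fin n) : ℕ) : ℚ)) / (e : ℚ)
          + (((d : ℤ) * m * ((k : ℕ) + 1) - m * κ : ℤ) : ℚ) := by
      field_simp
      push_cast
      ring
    rw [hsplit, Int.ceil_add_intCast]
    have hk : ((k : ℕ) : ℚ) < e := by
      have : (k : ℕ) < n := k.isLt
      have : (k : ℕ) < e := lt_of_lt_of_le this hn2
      exact_mod_cast this
    have hσk : (((σ k : Fin n) : ℕ) : ℚ) < e := by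
      have : ((σ k : Fin n) : ℕ) < n := (σ k).isLt
      have : ((σ k : Fin n) : ℕ) < e := lt_of_lt_of_le this hn2
      exact_mod_cast this
    by_cases hlt : ((σ k : Fin n) : ℕ) < (k : ℕ)
    · have hlt' : (((σ k : Fin n) : ℕ) : ℚ) < ((k : ℕ) : ℚ) := by exact_mod_cast hlt
      have hceil : ⌈(((k : ℕ) : ℚ) - (((σ k : Fin n) : ℕ) : ℚ)) / (e : ℚ)⌉ = 1 := by
        rw [Int.ceil_eq_iff]
        constructor
        · have : (0 : ℚ) < (((k : ℕ) : ℚ) - (((σ k : Fin n) : ℕ) : ℚ)) / (e : ℚ) :=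
            div_pos (by linarith) he0'
          push_cast
          linarith
        · exact (div_le_one he0').mpr (by linarith [hσk, hk])
      rw [hceil]
      simp [hlt]
      ring
    · have hle : ((k : ℕ) : ℚ) ≤ (((σ k : Fin n) : ℕ) : ℚ) := by
        push_cast
        exact_mod_cast Nat.le_of_not_lt hlt
      have hceil : ⌈(((k : ℕ) : ℚ) - (((σ k : Fin n) : ℕ) : ℚ)) / (e : ℚ)⌉ = 0 := by
        rw [Int.ceil_eq_zero_iff, Set.mem_Ioc]
        constructor
        · show (-1 : ℚ) < _
          rw [lt_div_iff₀ he0']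
          linarith [hσk]
        · show _ ≤ (0 : ℚ)
          apply div_nonpos_of_nonpos_of_nonneg <;> linarith
      rw [hceil]
      simp [hlt]
  -- abbreviations
  set T : ℤ := ∑ k : Fin n, (((k : ℕ) : ℤ) + 1) with hT
  have hT2 : 2 * T = (n : ℤ) * (n + 1) := by
    rw [hT, Fin.sum_univ_eq_sum_range (fun i => ((i : ℤ) + 1))]
    exact gauss_aux n
  have hsum : ∀ σ : Equiv.Perm (Fin n),
      (∑ k : Fin n, ⌈((p * ((k : ℕ) + 1) - (((σ k : Fin n) : ℕ) + 1) - K : ℤ) : ℚ) / (e : ℚ)⌉)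
        = ((d : ℤ) * m * T - (n : ℤ) * (m * κ))
          + ∑ k : Fin n, (if ((σ k : Fin n) : ℕ) < (k : ℕ) then (1 : ℤ) else 0) := by
    intro σ
    simp only [key σ]
    rw [Finset.sum_add_distrib, Finset.sum_sub_distrib, ← Finset.mul_sum,
      Finset.sum_const, Finset.card_univ, Fintype.card_fin, nsmul_eq_mul]
  have hTQ : (T : ℚ) = (n : ℚ) * (n + 1) / 2 := by
    have : (2 : ℚ) * (T : ℚ) = (n : ℚ) * (n + 1) := by exact_mod_cast hT2
    linarith
  have hRHS : ((p : ℚ) - 1) / e * (n * (n + 1) / 2) - ((p : ℚ) - 1) / (d * e) * κ * n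
      = (((d : ℤ) * m * T - (n : ℤ) * (m * κ) : ℤ) : ℚ) := by
    have hpm : ((p : ℚ) - 1) = (d : ℚ) * e * m := by exact_mod_cast hm
    rw [hpm]
    push_cast
    rw [hTQ]
    field_simp
  refine ⟨?_, ?_, ?_⟩
  · intro σ
    rw [hsum σ, hRHS]
    have hC : (0 : ℤ) ≤ ∑ k : Fin n, (if ((σ k : Fin n) : ℕ) < (k : ℕ) then (1 : ℤ) else 0) :=
      Finset.sum_nonneg (fun i _ => by positivity)
    exact_mod_cast le_add_of_nonneg_right hC
  · rw [hRHS]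
    have h1 := hsum 1
    simp only [Equiv.Perm.coe_one, id_eq, lt_self_iff_false, if_false,
      Finset.sum_const_zero, add_zero] at h1
    exact_mod_cast h1
  · intro σ hσ
    rw [hsum σ, hRHS] at hσ
    have hC0 : ∑ k : Fin n, (if ((σ k : Fin n) : ℕ) < (k : ℕ) then (1 : ℤ) else 0) = 0 := by
      have : ((d : ℤ) * m * T - (n : ℤ) * (m * κ))
          + ∑ k : Fin n, (if ((σ k : Fin n) : ℕ) < (k : ℕ) then (1 : ℤ) else 0)
          = ((d : ℤ) * m * T - (n : ℤ) * (m * κ)) := by exact_mod_cast hσ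
      linarith
    have hall := (Finset.sum_eq_zero_iff_of_nonneg
      (fun (i : Fin n) _ => by positivity :
        ∀ i ∈ Finset.univ, (0:ℤ) ≤ if ((σ i : Fin n) : ℕ) < (i : ℕ) then (1 : ℤ) else 0)).mp hC0
    have hle : ∀ k : Fin n, (k : ℕ) ≤ ((σ k : Fin n) : ℕ) := by
      intro k
      have := hall k (Finset.mem_univ k)
      by_contra hcon
      simp [Nat.lt_of_not_le hcon] at this
    have hsums : ∑ k : Fin n, ((k : ℕ)) = ∑ k : Fin n, (((σ k : Fin n) : ℕ)) :=
      (Equiv.sum_comp σ (fun k => (k : ℕ))).symm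
    have heq := (Finset.sum_eq_sum_iff_of_le (fun i _ => hle i)).mp hsums
    ext k
    have := heq k (Finset.mem_univ k)
    simp only [Equiv.Perm.coe_one, id_eq]
    exact this.symm
end
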